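/- arXiv:1106.5068 — 4 statements merged into one kernel-verified Lean document; each statement's English description precedes it below -/
import Mathlib

section
/- Cayley's hyperdeterminant Det is invariant under the action of SL₂(ℂ) × SL₂(ℂ) × SL₂(ℂ): for all matrices A, B, C ∈ SL₂(ℂ), applying the algebra automorphism of P determined by (A,B,C) to Det gives back Det. -/
open MvPolynomial

noncomputable section

abbrev P : Type := MvPolynomial (Fin 2 × Fin 2 × Fin 2) ℂ

/-- The action of a triple of SL₂(ℂ) matrices on the polynomial ring `P`,
as a ℂ-algebra homomorphism determined on variables by
`(A,B,C) · x_{ijk} = ∑ A_{i'i} B_{j'j} C_{k'k} x_{i'j'k'}`. -/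
def act (A B C : Matrix.SpecialLinearGroup (Fin 2) ℂ) : P →ₐ[ℂ] P :=
  MvPolynomial.aeval fun p =>
    ∑ i' : Fin 2, ∑ j' : Fin 2, ∑ k' : Fin 2,
      MvPolynomial.C (A.val i' p.1 * B.val j' p.2.1 * C.val k' p.2.2) *
        MvPolynomial.X (i', j', k')

/-- The variable `x_{ijk}`. -/
def x (i j k : Fin 2) : P := MvPolynomial.X (i, j, k)

/-- Cayley's hyperdeterminant of a 2×2×2 array. -/
def Det : P :=
  x 0 0 0 ^ 2 * x 1 1 1 ^ 2 + x 0 0 1 ^ 2 * x 1 1 0 ^ 2 +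
  x 0 1 0 ^ 2 * x 1 0 1 ^ 2 + x 0 1 1 ^ 2 * x 1 0 0 ^ 2 -
  2 * (x 0 0 0 * x 0 0 1 * x 1 1 0 * x 1 1 1 + x 0 0 0 * x 0 1 0 * x 1 0 1 * x 1 1 1 +
       x 0 0 0 * x 0 1 1 * x 1 0 0 * x 1 1 1 + x 0 0 1 * x 0 1 0 * x 1 0 1 * x 1 1 0 +
       x 0 0 1 * x 0 1 1 * x 1 0 0 * x 1 1 0 + x 0 1 0 * x 0 1 1 * x 1 0 0 * x 1 0 1) +
  4 * (x 0 0 0 * x 0 1 1 * x 1 0 1 * x 1 1 0 + x 0 0 1 * x 0 1 0 * x 1 0 0 * x 1 1 1)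

/-!
`Det` is a relative invariant of `GL₂ × GL₂ × GL₂` with character `(det A · det B · det C)²`.
Acting on one tensor factor at a time, this is a direct polynomial identity; the action of a
triple is the composite of the three single-factor actions, and on `SL₂` the character is trivial.
-/

def actMatrix (A B C : Matrix (Fin 2) (Fin 2) ℂ) : P →ₐ[ℂ] P :=
  aeval fun p =>
    ∑ i' : Fin 2, ∑ j' : Fin 2, ∑ k' : Fin 2,
      MvPolynomial.C (A i' p.1 * B j' p.2.1 * C k' p.2.2) * X (i', j', k')

theorem act_eq_actMatrix (A B C : Matrix.SpecialLinearGroup (Fin 2) ℂ) :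
    act A B C = actMatrix A B C :=
  rfl

section singleFactor

variable (M : Matrix (Fin 2) (Fin 2) ℂ)

theorem actMatrix_left_x (i j k : Fin 2) :
    actMatrix M 1 1 (x i j k) = C (M 0 i) * x 0 j k + C (M 1 i) * x 1 j k := by
  simp [actMatrix, x, Matrix.one_apply, mul_ite, ite_mul, apply_ite C]

theorem actMatrix_middle_x (i j k : Fin 2) :
    actMatrix 1 M 1 (x i j k) = C (M 0 j) * x i 0 k + C (M 1 j) * x i 1 k := by
  simp [actMatrix, x, Matrix.one_apply, mul_ite, ite_mul, apply_ite C]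

theorem actMatrix_right_x (i j k : Fin 2) :
    actMatrix 1 1 M (x i j k) = C (M 0 k) * x i j 0 + C (M 1 k) * x i j 1 := by
  simp [actMatrix, x, Matrix.one_apply, mul_ite, ite_mul, apply_ite C]

theorem actMatrix_left_Det : actMatrix M 1 1 Det = C (M.det ^ 2) * Det := by
  simp only [Det, map_add, map_sub, map_mul, map_pow, map_ofNat, actMatrix_left_x,
    Matrix.det_fin_two]
  ring

theorem actMatrix_middle_Det : actMatrix 1 M 1 Det = C (M.det ^ 2) * Det := by
  simp only [Det, map_add, map_sub, map_mul, map_pow, map_ofNat, actMatrix_middle_x,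
    Matrix.det_fin_two]
  ring

theorem actMatrix_right_Det : actMatrix 1 1 M Det = C (M.det ^ 2) * Det := by
  simp only [Det, map_add, map_sub, map_mul, map_pow, map_ofNat, actMatrix_right_x,
    Matrix.det_fin_two]
  ring

end singleFactor

theorem actMatrix_eq_comp (A B C : Matrix (Fin 2) (Fin 2) ℂ) :
    actMatrix A B C = (actMatrix A 1 1).comp ((actMatrix 1 B 1).comp (actMatrix 1 1 C)) := by
  refine algHom_ext fun ⟨i, j, k⟩ => ?_
  change actMatrix A B C (x i j k) = actMatrix A 1 1 (actMatrix 1 B 1 (actMatrix 1 1 C (x i j k)))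
  simp only [actMatrix_right_x, actMatrix_middle_x, actMatrix_left_x, map_add, map_mul,
    algHom_C, algebraMap_eq]
  simp only [actMatrix, x, aeval_X, Fin.sum_univ_two, map_mul]
  ring

theorem actMatrix_Det (A B C : Matrix (Fin 2) (Fin 2) ℂ) :
    actMatrix A B C Det = MvPolynomial.C ((A.det * B.det * C.det) ^ 2) * Det := by
  rw [actMatrix_eq_comp]
  simp only [AlgHom.comp_apply, actMatrix_right_Det, actMatrix_middle_Det,
    actMatrix_left_Det, map_mul, algHom_C, algebraMap_eq, mul_pow]
  ring

/-- Cayley's hyperdeterminant is invariant under SL₂(ℂ) × SL₂(ℂ) × SL₂(ℂ). -/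
theorem cayley_hyperdeterminant_invariant
    (A B C : Matrix.SpecialLinearGroup (Fin 2) ℂ) :
    act A B C Det = Det := by
  rw [act_eq_actMatrix, actMatrix_Det, A.det_coe, B.det_coe, C.det_coe]
  simp
end
end

section
/- There are no nonzero invariant polynomials of degree 2: if f ∈ P is homogeneous of degree 2 and invariant under the action of SL₂(ℂ) × SL₂(ℂ) × SL₂(ℂ), then f = 0. -/
open MvPolynomial

noncomputable section

abbrev σ' := Fin 2 × Fin 2 × Fin 2

lemma aeval_scale_monomial (c : σ' → ℂ) (e : σ' →₀ ℕ) (a : ℂ) :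
    aeval (fun p => C (c p) * X p : σ' → P) (monomial e a)
      = monomial e (a * e.prod fun p n => c p ^ n) := by
  rw [aeval_monomial]
  simp only [Finsupp.prod, mul_pow, ← C_pow, Finset.prod_mul_distrib, ← map_prod]
  rw [monomial_eq]
  simp [Finsupp.prod, mul_comm, mul_assoc, mul_left_comm]

lemma coeff_aeval_scale (c : σ' → ℂ) (f : P) (d : σ' →₀ ℕ) :
    coeff d (aeval (fun p => C (c p) * X p : σ' → P) f)
      = (d.prod fun p n => c p ^ n) * coeff d f := by
  conv_lhs => rw [f.as_sum]
  rw [map_sum, coeff_sum]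
  simp only [aeval_scale_monomial, coeff_monomial]
  rw [Finset.sum_ite_eq' f.support d]
  by_cases h : d ∈ f.support
  · simp [h, mul_comm]
  · simp [h, (notMem_support_iff.mp h)]

def T1 : Matrix.SpecialLinearGroup (Fin 2) ℂ :=
  ⟨!![2, 0; 0, 2⁻¹], by norm_num [Matrix.det_fin_two_of]⟩

lemma act_T1 : act T1 1 1 =
    MvPolynomial.aeval (fun p => C (if p.1 = 0 then (2:ℂ) else 2⁻¹) * X p : σ' → P) := by
  apply MvPolynomial.algHom_ext
  intro p
  simp only [act, aeval_X]
  fin_cases p <;>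
    simp [T1, Fin.sum_univ_two, Matrix.one_apply, Matrix.SpecialLinearGroup.coe_one]

lemma act_T2 : act 1 T1 1 =
    MvPolynomial.aeval (fun p => C (if p.2.1 = 0 then (2:ℂ) else 2⁻¹) * X p : σ' → P) := by
  apply MvPolynomial.algHom_ext
  intro p
  simp only [act, aeval_X]
  fin_cases p <;>
    simp [T1, Fin.sum_univ_two, Matrix.one_apply, Matrix.SpecialLinearGroup.coe_one]

lemma act_T3 : act 1 1 T1 =
    MvPolynomial.aeval (fun p => C (if p.2.2 = 0 then (2:ℂ) else 2⁻¹) * X p : σ' → P) := by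
  apply MvPolynomial.algHom_ext
  intro p
  simp only [act, aeval_X]
  fin_cases p <;>
    simp [T1, Fin.sum_univ_two, Matrix.one_apply, Matrix.SpecialLinearGroup.coe_one]

lemma weight_prod (g : σ' → Prop) [DecidablePred g] (d : σ' →₀ ℕ) :
    (d.prod fun p n => (if g p then (2:ℂ) else 2⁻¹) ^ n)
      = ∏ p : σ', (if g p then (2:ℂ) else 2⁻¹) ^ d p :=
  Finsupp.prod_fintype _ _ (by simp)

lemma two_pow_inj (a b : ℕ) (h : (2:ℂ) ^ a * 2⁻¹ ^ b = 1) : a = b := by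
  rw [inv_pow, mul_inv_eq_one₀ (by norm_num)] at h
  have h2 : ((2 ^ a : ℕ) : ℂ) = ((2 ^ b : ℕ) : ℂ) := by push_cast; exact h
  exact Nat.pow_right_injective le_rfl (Nat.cast_injective h2)

lemma prod_weight_eq (g : σ' → Prop) [DecidablePred g] (d : σ' →₀ ℕ) :
    (∏ p : σ', (if g p then (2:ℂ) else 2⁻¹) ^ d p)
      = 2 ^ (∑ p ∈ Finset.univ.filter g, d p) * 2⁻¹ ^ (∑ p ∈ Finset.univ.filter (¬ g ·), d p) := by
  rw [← Finset.prod_filter_mul_prod_filter_not Finset.univ g]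
  congr 1
  · rw [← Finset.prod_pow_eq_pow_sum]
    exact Finset.prod_congr rfl fun p hp => by rw [if_pos (Finset.mem_filter.mp hp).2]
  · rw [← Finset.prod_pow_eq_pow_sum]
    exact Finset.prod_congr rfl fun p hp => by rw [if_neg (Finset.mem_filter.mp hp).2]

lemma coeff_zero_of_scale (f : P) (g : σ' → Prop) [DecidablePred g] (d : σ' →₀ ℕ)
    (key : aeval (fun p => C (if g p then (2:ℂ) else 2⁻¹) * X p : σ' → P) f = f)
    (h : (∑ p ∈ Finset.univ.filter g, d p) ≠ ∑ p ∈ Finset.univ.filter (¬ g ·), d p) :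
    coeff d f = 0 := by
  by_contra hc
  apply h
  apply two_pow_inj
  have key2 := congrArg (coeff d) key
  rw [coeff_aeval_scale, weight_prod g, prod_weight_eq] at key2
  exact mul_right_cancel₀ hc (by rw [key2, one_mul])

lemma degree_univ (d : σ' →₀ ℕ) : d.degree = ∑ p : σ', d p :=
  Finset.sum_subset (Finset.subset_univ _) (fun p _ hp => Finsupp.notMem_support_iff.mp hp)

example (d : σ' →₀ ℕ) : (∑ p ∈ Finset.univ.filter (fun p : σ' => p.1 = 0), d p)
    = d (0,0,0) + d (0,0,1) + d (0,1,0) + d (0,1,1) := by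
  rw [Finset.sum_filter]
  simp [Fintype.sum_prod_type, Fin.sum_univ_two]
  ring

def D1 : σ' →₀ ℕ := Finsupp.single (0,0,0) 1 + Finsupp.single (1,1,1) 1
def D2 : σ' →₀ ℕ := Finsupp.single (0,0,1) 1 + Finsupp.single (1,1,0) 1
def D3 : σ' →₀ ℕ := Finsupp.single (0,1,0) 1 + Finsupp.single (1,0,1) 1
def D4 : σ' →₀ ℕ := Finsupp.single (0,1,1) 1 + Finsupp.single (1,0,0) 1

lemma sum_univ_vals (d : σ' →₀ ℕ) : ∑ p : σ', d p =
    d (0,0,0) + d (0,0,1) + d (0,1,0) + d (0,1,1) +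
    (d (1,0,0) + d (1,0,1) + d (1,1,0) + d (1,1,1)) := by
  rw [Fintype.sum_prod_type]
  simp only [Fintype.sum_prod_type, Fin.sum_univ_two]
  omega

lemma filt1 (d : σ' →₀ ℕ) : (∑ p ∈ Finset.univ.filter (fun p : σ' => p.1 = 0), d p)
    = d (0,0,0) + d (0,0,1) + d (0,1,0) + d (0,1,1) := by
  rw [Finset.sum_filter, Fintype.sum_prod_type]
  simp only [Fintype.sum_prod_type, Fin.sum_univ_two]
  norm_num
  omega

lemma filt1' (d : σ' →₀ ℕ) : (∑ p ∈ Finset.univ.filter (fun p : σ' => ¬ p.1 = 0), d p)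
    = d (1,0,0) + d (1,0,1) + d (1,1,0) + d (1,1,1) := by
  rw [Finset.sum_filter, Fintype.sum_prod_type]
  simp only [Fintype.sum_prod_type, Fin.sum_univ_two]
  norm_num
  omega

lemma filt2 (d : σ' →₀ ℕ) : (∑ p ∈ Finset.univ.filter (fun p : σ' => p.2.1 = 0), d p)
    = d (0,0,0) + d (0,0,1) + d (1,0,0) + d (1,0,1) := by
  rw [Finset.sum_filter, Fintype.sum_prod_type]
  simp only [Fintype.sum_prod_type, Fin.sum_univ_two]
  norm_num
  omega

lemma filt2' (d : σ' →₀ ℕ) : (∑ p ∈ Finset.univ.filter (fun p : σ' => ¬ p.2.1 = 0), d p)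
    = d (0,1,0) + d (0,1,1) + d (1,1,0) + d (1,1,1) := by
  rw [Finset.sum_filter, Fintype.sum_prod_type]
  simp only [Fintype.sum_prod_type, Fin.sum_univ_two]
  norm_num
  omega

lemma filt3 (d : σ' →₀ ℕ) : (∑ p ∈ Finset.univ.filter (fun p : σ' => p.2.2 = 0), d p)
    = d (0,0,0) + d (0,1,0) + d (1,0,0) + d (1,1,0) := by
  rw [Finset.sum_filter, Fintype.sum_prod_type]
  simp only [Fintype.sum_prod_type, Fin.sum_univ_two]
  norm_num
  omega

lemma filt3' (d : σ' →₀ ℕ) : (∑ p ∈ Finset.univ.filter (fun p : σ' => ¬ p.2.2 = 0), d p)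
    = d (0,0,1) + d (0,1,1) + d (1,0,1) + d (1,1,1) := by
  rw [Finset.sum_filter, Fintype.sum_prod_type]
  simp only [Fintype.sum_prod_type, Fin.sum_univ_two]
  norm_num
  omega

set_option maxHeartbeats 1000000 in
lemma key_classify (f : P) (hhom : MvPolynomial.IsHomogeneous f 2)
    (h1 : aeval (fun p => C (if p.1 = 0 then (2:ℂ) else 2⁻¹) * X p : σ' → P) f = f)
    (h2 : aeval (fun p => C (if p.2.1 = 0 then (2:ℂ) else 2⁻¹) * X p : σ' → P) f = f)
    (h3 : aeval (fun p => C (if p.2.2 = 0 then (2:ℂ) else 2⁻¹) * X p : σ' → P) f = f)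
    (d : σ' →₀ ℕ) :
    coeff d f = 0 ∨ d = D1 ∨ d = D2 ∨ d = D3 ∨ d = D4 := by
  by_cases hdeg : d.degree = 2
  swap
  · exact Or.inl (hhom.coeff_eq_zero hdeg)
  by_cases i1 : (∑ p ∈ Finset.univ.filter (fun p : σ' => p.1 = 0), d p)
      = (∑ p ∈ Finset.univ.filter (fun p : σ' => ¬ p.1 = 0), d p)
  swap
  · exact Or.inl (coeff_zero_of_scale f _ d h1 i1)
  by_cases i2 : (∑ p ∈ Finset.univ.filter (fun p : σ' => p.2.1 = 0), d p)
      = (∑ p ∈ Finset.univ.filter (fun p : σ' => ¬ p.2.1 = 0), d p)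
  swap
  · exact Or.inl (coeff_zero_of_scale f _ d h2 i2)
  by_cases i3 : (∑ p ∈ Finset.univ.filter (fun p : σ' => p.2.2 = 0), d p)
      = (∑ p ∈ Finset.univ.filter (fun p : σ' => ¬ p.2.2 = 0), d p)
  swap
  · exact Or.inl (coeff_zero_of_scale f _ d h3 i3)
  right
  rw [degree_univ, sum_univ_vals] at hdeg
  rw [filt1, filt1'] at i1
  rw [filt2, filt2'] at i2
  rw [filt3, filt3'] at i3
  have hpat : (d (0,0,0) = 1 ∧ d (0,0,1) = 0 ∧ d (0,1,0) = 0 ∧ d (0,1,1) = 0 ∧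
        d (1,0,0) = 0 ∧ d (1,0,1) = 0 ∧ d (1,1,0) = 0 ∧ d (1,1,1) = 1) ∨
      (d (0,0,0) = 0 ∧ d (0,0,1) = 1 ∧ d (0,1,0) = 0 ∧ d (0,1,1) = 0 ∧
        d (1,0,0) = 0 ∧ d (1,0,1) = 0 ∧ d (1,1,0) = 1 ∧ d (1,1,1) = 0) ∨
      (d (0,0,0) = 0 ∧ d (0,0,1) = 0 ∧ d (0,1,0) = 1 ∧ d (0,1,1) = 0 ∧
        d (1,0,0) = 0 ∧ d (1,0,1) = 1 ∧ d (1,1,0) = 0 ∧ d (1,1,1) = 0) ∨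
      (d (0,0,0) = 0 ∧ d (0,0,1) = 0 ∧ d (0,1,0) = 0 ∧ d (0,1,1) = 1 ∧
        d (1,0,0) = 1 ∧ d (1,0,1) = 0 ∧ d (1,1,0) = 0 ∧ d (1,1,1) = 0) := by
    omega
  rcases hpat with hp | hp | hp | hp
  · exact Or.inl (Finsupp.ext fun p => by
      fin_cases p <;> simp +decide [D1, Finsupp.single_apply, Prod.ext_iff, -Prod.mk_one_one, -Prod.mk_zero_zero] <;> omega)
  · exact Or.inr (Or.inl (Finsupp.ext fun p => by
      fin_cases p <;> simp +decide [D2, Finsupp.single_apply, Prod.ext_iff, -Prod.mk_one_one, -Prod.mk_zero_zero] <;> omega))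
  · exact Or.inr (Or.inr (Or.inl (Finsupp.ext fun p => by
      fin_cases p <;> simp +decide [D3, Finsupp.single_apply, Prod.ext_iff, -Prod.mk_one_one, -Prod.mk_zero_zero] <;> omega)))
  · exact Or.inr (Or.inr (Or.inr (Finsupp.ext fun p => by
      fin_cases p <;> simp +decide [D4, Finsupp.single_apply, Prod.ext_iff, -Prod.mk_one_one, -Prod.mk_zero_zero] <;> omega)))

lemma XX (p q : σ') : (X p * X q : P) = monomial (Finsupp.single p 1 + Finsupp.single q 1) 1 := by
  rw [← pow_one (X p : P), ← pow_one (X q : P), X_pow_eq_monomial, X_pow_eq_monomial,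
    monomial_mul, one_mul]

def g4 (a b c d : ℂ) : P :=
  C a * (X ((0,0,0):σ') * X ((1,1,1):σ')) + C b * (X ((0,0,1):σ') * X ((1,1,0):σ'))
  + C c * (X ((0,1,0):σ') * X ((1,0,1):σ')) + C d * (X ((0,1,1):σ') * X ((1,0,0):σ'))

lemma g4_eq (a b c d : ℂ) : g4 a b c d =
    monomial D1 a + monomial D2 b + monomial D3 c + monomial D4 d := by
  simp [g4, XX, C_mul_monomial, D1, D2, D3, D4]

lemma aeval_act (v : σ' → ℂ) (A B C : Matrix.SpecialLinearGroup (Fin 2) ℂ) (f : P) :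
    aeval v (act A B C f) =
      aeval (fun p : σ' => ∑ i' : Fin 2, ∑ j' : Fin 2, ∑ k' : Fin 2,
        A.val i' p.1 * B.val j' p.2.1 * C.val k' p.2.2 * v (i',j',k')) f := by
  rw [act, ← AlgHom.comp_apply, comp_aeval]
  have h : (fun i : σ' => aeval v (∑ i' : Fin 2, ∑ j' : Fin 2, ∑ k' : Fin 2,
        MvPolynomial.C (A.val i' i.1 * B.val j' i.2.1 * C.val k' i.2.2) * X (i', j', k')))
      = fun p : σ' => ∑ i' : Fin 2, ∑ j' : Fin 2, ∑ k' : Fin 2,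
        A.val i' p.1 * B.val j' p.2.1 * C.val k' p.2.2 * v (i',j',k') := by
    funext p
    simp
  rw [h]

lemma aeval_g4 (v : σ' → ℂ) (a b c d : ℂ) : aeval v (g4 a b c d) =
    a * (v (0,0,0) * v (1,1,1)) + b * (v (0,0,1) * v (1,1,0))
    + c * (v (0,1,0) * v (1,0,1)) + d * (v (0,1,1) * v (1,0,0)) := by
  simp [g4]

def U1 : Matrix.SpecialLinearGroup (Fin 2) ℂ :=
  ⟨!![1, 1; 0, 1], by norm_num [Matrix.det_fin_two_of]⟩

lemma D_ne : D1 ≠ D2 ∧ D1 ≠ D3 ∧ D1 ≠ D4 ∧ D2 ≠ D3 ∧ D2 ≠ D4 ∧ D3 ≠ D4 := by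
  refine ⟨fun h => ?_, fun h => ?_, fun h => ?_, fun h => ?_, fun h => ?_, fun h => ?_⟩
  · have := DFunLike.congr_fun h ((0,0,0):σ')
    simp +decide [D1, D2, Finsupp.single_apply, Prod.ext_iff,
      -Prod.mk_zero_zero, -Prod.mk_one_one] at this
  · have := DFunLike.congr_fun h ((0,0,0):σ')
    simp +decide [D1, D3, Finsupp.single_apply, Prod.ext_iff,
      -Prod.mk_zero_zero, -Prod.mk_one_one] at this
  · have := DFunLike.congr_fun h ((0,0,0):σ')
    simp +decide [D1, D4, Finsupp.single_apply, Prod.ext_iff,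
      -Prod.mk_zero_zero, -Prod.mk_one_one] at this
  · have := DFunLike.congr_fun h ((0,0,1):σ')
    simp +decide [D2, D3, Finsupp.single_apply, Prod.ext_iff,
      -Prod.mk_zero_zero, -Prod.mk_one_one] at this
  · have := DFunLike.congr_fun h ((0,0,1):σ')
    simp +decide [D2, D4, Finsupp.single_apply, Prod.ext_iff,
      -Prod.mk_zero_zero, -Prod.mk_one_one] at this
  · have := DFunLike.congr_fun h ((0,1,0):σ')
    simp +decide [D3, D4, Finsupp.single_apply, Prod.ext_iff,
      -Prod.mk_zero_zero, -Prod.mk_one_one] at this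

lemma f_eq_g4 (f : P) (hhom : MvPolynomial.IsHomogeneous f 2)
    (h1 : aeval (fun p => C (if p.1 = 0 then (2:ℂ) else 2⁻¹) * X p : σ' → P) f = f)
    (h2 : aeval (fun p => C (if p.2.1 = 0 then (2:ℂ) else 2⁻¹) * X p : σ' → P) f = f)
    (h3 : aeval (fun p => C (if p.2.2 = 0 then (2:ℂ) else 2⁻¹) * X p : σ' → P) f = f) :
    f = g4 (coeff D1 f) (coeff D2 f) (coeff D3 f) (coeff D4 f) := by
  obtain ⟨n12, n13, n14, n23, n24, n34⟩ := D_ne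
  rw [g4_eq]
  apply MvPolynomial.ext
  intro e
  simp only [coeff_add, coeff_monomial]
  rcases key_classify f hhom h1 h2 h3 e with h0 | rfl | rfl | rfl | rfl
  · split_ifs with a1 a2 a3 a4 <;> simp_all
  · simp [Ne.symm n12, Ne.symm n13, Ne.symm n14]
  · simp [n12, Ne.symm n23, Ne.symm n24]
  · simp [n13, n23, Ne.symm n34]
  · simp [n14, n24, n34]


/-- There are no nonzero invariant polynomials of degree 2. -/
theorem no_invariants_degree_two (f : P)
    (hhom : MvPolynomial.IsHomogeneous f 2)
    (hinv : ∀ A B C : Matrix.SpecialLinearGroup (Fin 2) ℂ, act A B C f = f) :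
    f = 0 := by
  have h1 : aeval (fun p => C (if p.1 = 0 then (2:ℂ) else 2⁻¹) * X p : σ' → P) f = f := by
    rw [← act_T1]; exact hinv T1 1 1
  have h2 : aeval (fun p => C (if p.2.1 = 0 then (2:ℂ) else 2⁻¹) * X p : σ' → P) f = f := by
    rw [← act_T2]; exact hinv 1 T1 1
  have h3 : aeval (fun p => C (if p.2.2 = 0 then (2:ℂ) else 2⁻¹) * X p : σ' → P) f = f := by
    rw [← act_T3]; exact hinv 1 1 T1
  have hf := f_eq_g4 f hhom h1 h2 h3
  have E1 := congrArg (aeval (fun p : σ' => if p = ((0,0,0):σ') then (1:ℂ)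
      else if p = ((0,1,1):σ') then 1 else 0)) (hinv U1 1 1)
  rw [aeval_act, hf, aeval_g4, aeval_g4] at E1
  simp [U1, Fin.sum_univ_two, Matrix.one_apply, Prod.ext_iff,
    -Prod.mk_zero_zero, -Prod.mk_one_one] at E1
  have E2 := congrArg (aeval (fun p : σ' => if p = ((0,0,1):σ') then (1:ℂ)
      else if p = ((0,1,0):σ') then 1 else 0)) (hinv U1 1 1)
  rw [aeval_act, hf, aeval_g4, aeval_g4] at E2
  simp [U1, Fin.sum_univ_two, Matrix.one_apply, Prod.ext_iff,
    -Prod.mk_zero_zero, -Prod.mk_one_one] at E2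
  have E3 := congrArg (aeval (fun p : σ' => if p = ((0,0,0):σ') then (1:ℂ)
      else if p = ((1,0,1):σ') then 1 else 0)) (hinv 1 U1 1)
  rw [aeval_act, hf, aeval_g4, aeval_g4] at E3
  simp [U1, Fin.sum_univ_two, Matrix.one_apply, Prod.ext_iff,
    -Prod.mk_zero_zero, -Prod.mk_one_one] at E3
  have E4 := congrArg (aeval (fun p : σ' => if p = ((0,0,0):σ') then (1:ℂ)
      else if p = ((1,1,0):σ') then 1 else 0)) (hinv 1 1 U1)
  rw [aeval_act, hf, aeval_g4, aeval_g4] at E4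
  simp [U1, Fin.sum_univ_two, Matrix.one_apply, Prod.ext_iff,
    -Prod.mk_zero_zero, -Prod.mk_one_one] at E4
  have ha : MvPolynomial.coeff D1 f = 0 := by linear_combination (E3 + E4 - E2) / 2
  have hb : MvPolynomial.coeff D2 f = 0 := by linear_combination E4 - ha
  have hc : MvPolynomial.coeff D3 f = 0 := by linear_combination E3 - ha
  have hd : MvPolynomial.coeff D4 f = 0 := by linear_combination E1 - ha
  rw [hf, ha, hb, hc, hd]
  simp [g4]
end
end

section
/- In degree 4 the space of invariant polynomials has dimension 1: every f ∈ P that is homogeneous of degree 4 and invariant under the action of SL₂(ℂ) × SL₂(ℂ) × SL₂(ℂ) is a scalar multiple of Cayley's hyperdeterminant Det, i.e. f = λ • Det for some λ ∈ ℂ. -/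
open MvPolynomial

noncomputable section

/-!
The diagonal torus of `SL₂(ℂ)³` multiplies each monomial by a character, so an invariant
polynomial only contains monomials that are balanced along every axis: as many variables with
index `0` as with index `1` in that position. In degree four there are exactly twelve such
monomials, those of `Det`. Invariance under the three shears `[[1, 1], [0, 1]]`, evaluated at a
few `0`/`1` arrays, gives eleven independent linear relations between the twelve coefficients,
and their solutions are the multiples of the coefficient vector of `Det`.
-/

namespace MvPolynomial

variable {σ R : Type*} [CommSemiring R]

theorem coeff_aeval_C_mul_X [Fintype σ] (d : σ → R) (n : σ →₀ ℕ) (g : MvPolynomial σ R) :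
    coeff n (aeval (fun i => C (d i) * X i) g) = (∏ i, d i ^ n i) * coeff n g := by
  classical
  induction g using MvPolynomial.induction_on' with
  | add p q hp hq => simp only [map_add, coeff_add, hp, hq, mul_add]
  | monomial m a =>
    have hm : aeval (fun i => C (d i) * X i) (monomial m a) =
        C (∏ i, d i ^ m i) * monomial m a := by
      rw [aeval_monomial, monomial_eq, Finsupp.prod_fintype _ _ (fun _ => pow_zero _),
        Finsupp.prod_fintype _ _ (fun _ => pow_zero _)]
      simp only [mul_pow, Finset.prod_mul_distrib, map_prod, map_pow, algebraMap_eq]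
      ring
    rw [hm, coeff_C_mul, coeff_monomial]
    split_ifs with h
    · rw [h]
    · simp

theorem eq_sum_monomial_of_coeff_ne_zero {ι : Type*} [Fintype ι] {M : ι → σ →₀ ℕ}
    (hM : Function.Injective M) {f : MvPolynomial σ R}
    (hf : ∀ n, coeff n f ≠ 0 → n ∈ Set.range M) :
    f = ∑ i, monomial (M i) (coeff (M i) f) := by
  classical
  calc f = ∑ n ∈ f.support, monomial n (coeff n f) := f.as_sum
    _ = ∑ n ∈ Finset.univ.image M, monomial n (coeff n f) := by
      refine Finset.sum_subset (fun n hn => ?_) (fun n _ hn => ?_)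
      · obtain ⟨i, rfl⟩ := hf n (mem_support_iff.mp hn)
        exact Finset.mem_image_of_mem M (Finset.mem_univ i)
      · rw [notMem_support_iff.mp hn, monomial_zero]
    _ = ∑ i, monomial (M i) (coeff (M i) f) := Finset.sum_image fun i _ j _ hij => hM hij

end MvPolynomial

theorem Finset.prod_zpow_pow {ι K : Type*} [CommGroupWithZero K] {t : K} (ht : t ≠ 0)
    (s : Finset ι) (k : ι → ℤ) (n : ι → ℕ) :
    ∏ i ∈ s, (t ^ k i) ^ n i = t ^ ∑ i ∈ s, k i * (n i : ℤ) := by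
  classical
  induction s using Finset.induction_on with
  | empty => simp
  | insert i s hi ih =>
    rw [Finset.prod_insert hi, Finset.sum_insert hi, ih, zpow_add₀ ht, ← zpow_natCast, ← zpow_mul]

theorem eq_zero_of_two_zpow_eq_one {k : ℤ} (h : (2 : ℂ) ^ k = 1) : k = 0 := by
  have h' : (((2 : ℝ) ^ k : ℝ) : ℂ) = 1 := by push_cast; exact h
  exact (zpow_eq_one_iff_right₀ zero_le_two (by norm_num)).mp (Complex.ofReal_eq_one.mp h')

local notation "SL₂" => Matrix.SpecialLinearGroup (Fin 2) ℂ
local notation "Cell" => Fin 2 × Fin 2 × Fin 2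

def cube {α : Type*} (a₀₀₀ a₀₀₁ a₀₁₀ a₀₁₁ a₁₀₀ a₁₀₁ a₁₁₀ a₁₁₁ : α) : Cell → α :=
  fun p => ![![![a₀₀₀, a₀₀₁], ![a₀₁₀, a₀₁₁]], ![![a₁₀₀, a₁₀₁], ![a₁₁₀, a₁₁₁]]] p.1 p.2.1 p.2.2

theorem eq_cube {α : Type*} (v : Cell → α) :
    v = cube (v (0, 0, 0)) (v (0, 0, 1)) (v (0, 1, 0)) (v (0, 1, 1))
      (v (1, 0, 0)) (v (1, 0, 1)) (v (1, 1, 0)) (v (1, 1, 1)) := by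
  funext ⟨i, j, k⟩
  fin_cases i <;> fin_cases j <;> fin_cases k <;> rfl

def axisSign : Fin 2 → ℤ := ![1, -1]

def axisWeight (π : Cell → Fin 2) (v : Cell → ℕ) : ℤ := ∑ p, axisSign (π p) * v p

def IsBalanced (v : Cell → ℕ) : Prop :=
  axisWeight Prod.fst v = 0 ∧ axisWeight (·.2.1) v = 0 ∧ axisWeight (·.2.2) v = 0

def torus (t : ℂ) (ht : t ≠ 0) : SL₂ :=
  ⟨Matrix.diagonal fun i => t ^ axisSign i, by simp [axisSign, ht]⟩

theorem act_torus {a b c : ℂ} (ha : a ≠ 0) (hb : b ≠ 0) (hc : c ≠ 0) (g : P) :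
    act (torus a ha) (torus b hb) (torus c hc) g =
      aeval (fun p => C (a ^ axisSign p.1 * b ^ axisSign p.2.1 * c ^ axisSign p.2.2) * X p) g := by
  unfold act
  congr
  funext ⟨i, j, k⟩
  simp only [torus, Matrix.diagonal_apply, ite_mul, zero_mul, mul_ite, mul_zero, apply_ite C,
    map_zero, Finset.sum_ite_eq', Finset.mem_univ, if_true, map_mul]

theorem coeff_act_torus {a b c : ℂ} (ha : a ≠ 0) (hb : b ≠ 0) (hc : c ≠ 0)
    (n : Cell →₀ ℕ) (g : P) :
    coeff n (act (torus a ha) (torus b hb) (torus c hc) g) =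
      a ^ axisWeight Prod.fst n * b ^ axisWeight (·.2.1) n * c ^ axisWeight (·.2.2) n *
        coeff n g := by
  rw [act_torus, coeff_aeval_C_mul_X]
  simp only [mul_pow, Finset.prod_mul_distrib, Finset.prod_zpow_pow ha, Finset.prod_zpow_pow hb,
    Finset.prod_zpow_pow hc, axisWeight]

theorem isBalanced_of_coeff_ne_zero {f : P} (hinv : ∀ A B C : SL₂, act A B C f = f)
    {n : Cell →₀ ℕ} (hn : coeff n f ≠ 0) : IsBalanced n := by
  have key {a b c : ℂ} (ha : a ≠ 0) (hb : b ≠ 0) (hc : c ≠ 0) :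
      a ^ axisWeight Prod.fst n * b ^ axisWeight (·.2.1) n * c ^ axisWeight (·.2.2) n = 1 := by
    simpa [hn] using (coeff_act_torus ha hb hc n f).symm.trans (congrArg (coeff n) (hinv _ _ _))
  refine ⟨?_, ?_, ?_⟩ <;> apply eq_zero_of_two_zpow_eq_one
  · simpa using key two_ne_zero one_ne_zero one_ne_zero
  · simpa using key one_ne_zero two_ne_zero one_ne_zero
  · simpa using key one_ne_zero one_ne_zero two_ne_zero

def quarticExp : Fin 12 → Cell → ℕ :=
  ![cube 2 0 0 0 0 0 0 2, cube 0 2 0 0 0 0 2 0, cube 0 0 2 0 0 2 0 0, cube 0 0 0 2 2 0 0 0,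
    cube 1 1 0 0 0 0 1 1, cube 1 0 1 0 0 1 0 1, cube 1 0 0 1 1 0 0 1,
    cube 0 1 1 0 0 1 1 0, cube 0 1 0 1 1 0 1 0, cube 0 0 1 1 1 1 0 0,
    cube 1 0 0 1 0 1 1 0, cube 0 1 1 0 1 0 0 1]

theorem quarticExp_injective : Function.Injective quarticExp := by decide

theorem exists_quarticExp_eq {v : Cell → ℕ} (hdeg : ∑ p, v p = 4) (hv : IsBalanced v) :
    ∃ i, quarticExp i = v := by
  obtain ⟨a, b, c, d, e, f, g, h, rfl⟩ : ∃ a b c d e f g h, v = cube a b c d e f g h :=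
    ⟨_, _, _, _, _, _, _, _, eq_cube v⟩
  simp only [IsBalanced, axisWeight, axisSign, cube, Fintype.sum_prod_type, Fin.sum_univ_two,
    Matrix.cons_val_zero, Matrix.cons_val_one] at hdeg hv
  -- the degree and the three balance conditions determine `d, f, g, h` from `a, b, c, e`
  obtain ⟨rfl, rfl, rfl, rfl⟩ : d = 2 - (a + b + c) ∧ f = 2 - (a + b + e) ∧
      g = 2 - (a + c + e) ∧ h = a + (a + b + c + e) - 2 := by omega
  obtain ⟨ha, hb, hc, he⟩ : a ≤ 2 ∧ b ≤ 2 ∧ c ≤ 2 ∧ e ≤ 2 := by omega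
  interval_cases a <;> interval_cases b <;> interval_cases c <;> interval_cases e <;>
    first | omega | decide

def quarticMonomial (i : Fin 12) : Cell →₀ ℕ := Finsupp.equivFunOnFinite.symm (quarticExp i)

theorem mem_range_quarticMonomial {n : Cell →₀ ℕ} (hdeg : n.degree = 4) (hn : IsBalanced n) :
    n ∈ Set.range quarticMonomial := by
  obtain ⟨i, hi⟩ := exists_quarticExp_eq (by rwa [Finsupp.degree_eq_sum] at hdeg) hn
  exact ⟨i, by rw [quarticMonomial, hi, Finsupp.equivFunOnFinite_symm_coe]⟩

def quarticForm (c : Fin 12 → ℂ) : P := ∑ i, monomial (quarticMonomial i) (c i)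

theorem exists_eq_quarticForm {f : P} (hhom : f.IsHomogeneous 4)
    (hinv : ∀ A B C : SL₂, act A B C f = f) : ∃ c, f = quarticForm c :=
  ⟨fun i => coeff (quarticMonomial i) f,
    eq_sum_monomial_of_coeff_ne_zero
      (Finsupp.equivFunOnFinite.symm.injective.comp quarticExp_injective)
      fun _ hn => mem_range_quarticMonomial (by rw [Finsupp.degree_eq_weight_one]; exact hhom hn)
        (isBalanced_of_coeff_ne_zero hinv hn)⟩

theorem quarticForm_smul (r : ℂ) (c : Fin 12 → ℂ) : quarticForm (r • c) = r • quarticForm c := by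
  simp [quarticForm, Finset.smul_sum, smul_monomial]

theorem quarticForm_eq (c : Fin 12 → ℂ) :
    quarticForm c =
      C (c 0) * x 0 0 0 ^ 2 * x 1 1 1 ^ 2 + C (c 1) * x 0 0 1 ^ 2 * x 1 1 0 ^ 2 +
      C (c 2) * x 0 1 0 ^ 2 * x 1 0 1 ^ 2 + C (c 3) * x 0 1 1 ^ 2 * x 1 0 0 ^ 2 +
      C (c 4) * x 0 0 0 * x 0 0 1 * x 1 1 0 * x 1 1 1 +
      C (c 5) * x 0 0 0 * x 0 1 0 * x 1 0 1 * x 1 1 1 +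
      C (c 6) * x 0 0 0 * x 0 1 1 * x 1 0 0 * x 1 1 1 +
      C (c 7) * x 0 0 1 * x 0 1 0 * x 1 0 1 * x 1 1 0 +
      C (c 8) * x 0 0 1 * x 0 1 1 * x 1 0 0 * x 1 1 0 +
      C (c 9) * x 0 1 0 * x 0 1 1 * x 1 0 0 * x 1 0 1 +
      C (c 10) * x 0 0 0 * x 0 1 1 * x 1 0 1 * x 1 1 0 +
      C (c 11) * x 0 0 1 * x 0 1 0 * x 1 0 0 * x 1 1 1 := by
  simp only [quarticForm, quarticMonomial, monomial_eq,
    Finsupp.prod_fintype _ _ (fun _ => pow_zero _), Finsupp.coe_equivFunOnFinite_symm,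
    Fin.sum_univ_succ, Fin.sum_univ_zero,
    Fintype.prod_prod_type, Fin.prod_univ_two, quarticExp, cube, x, Fin.succ_zero_eq_one,
    Fin.succ_one_eq_two, Fin.reduceSucc, Matrix.cons_val_zero, Matrix.cons_val_one, Matrix.cons_val,
    pow_zero, mul_one]
  ring

def detCoeff : Fin 12 → ℂ := ![1, 1, 1, 1, -2, -2, -2, -2, -2, -2, 4, 4]

theorem Det_eq_quarticForm : Det = quarticForm detCoeff := by
  rw [quarticForm_eq, Det]
  simp only [detCoeff, Matrix.cons_val, map_one, map_neg, map_ofNat]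
  ring

def smulArray (A B C : SL₂) (v : Cell → ℂ) : Cell → ℂ :=
  fun p => ∑ i, ∑ j, ∑ k, A i p.1 * B j p.2.1 * C k p.2.2 * v (i, j, k)

theorem eval_act (A B C : SL₂) (v : Cell → ℂ) (g : P) :
    eval v (act A B C g) = eval (smulArray A B C v) g := by
  rw [act, ← aeval_eq_eval, comp_aeval_apply, aeval_eq_eval]
  exact congrArg (fun w => eval w g) (funext fun p => by simp [smulArray])

def shear : SL₂ := ⟨!![1, 1; 0, 1], by simp [Matrix.det_fin_two]⟩

theorem smulArray_shear_one_one (a b c d e f g h : ℂ) :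
    smulArray shear 1 1 (cube a b c d e f g h) = cube a b c d (a + e) (b + f) (c + g) (d + h) := by
  funext ⟨i, j, k⟩
  fin_cases i <;> fin_cases j <;> fin_cases k <;>
    simp [smulArray, shear, cube, Fin.sum_univ_two, Matrix.one_apply]

theorem smulArray_one_shear_one (a b c d e f g h : ℂ) :
    smulArray 1 shear 1 (cube a b c d e f g h) = cube a b (a + c) (b + d) e f (e + g) (f + h) := by
  funext ⟨i, j, k⟩
  fin_cases i <;> fin_cases j <;> fin_cases k <;>
    simp [smulArray, shear, cube, Fin.sum_univ_two, Matrix.one_apply]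

theorem smulArray_one_one_shear (a b c d e f g h : ℂ) :
    smulArray 1 1 shear (cube a b c d e f g h) = cube a (a + b) c (c + d) e (e + f) g (g + h) := by
  funext ⟨i, j, k⟩
  fin_cases i <;> fin_cases j <;> fin_cases k <;>
    simp [smulArray, shear, cube, Fin.sum_univ_two, Matrix.one_apply]

theorem eq_smul_detCoeff_of_invariant {c : Fin 12 → ℂ}
    (hinv : ∀ A B C : SL₂, act A B C (quarticForm c) = quarticForm c) : c = c 0 • detCoeff := by
  have key (A B C : SL₂) (v : Cell → ℂ) :
      eval (smulArray A B C v) (quarticForm c) = eval v (quarticForm c) := by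
    rw [← eval_act, hinv]
  have e₁ := key shear 1 1 (cube 0 1 1 0 0 0 0 0)
  have e₂ := key shear 1 1 (cube 1 0 0 1 0 0 0 0)
  have e₃ := key 1 shear 1 (cube 0 1 0 0 1 0 0 0)
  have e₄ := key 1 shear 1 (cube 1 0 0 0 0 1 0 0)
  have e₅ := key 1 1 shear (cube 0 0 1 0 1 0 0 0)
  have e₆ := key 1 1 shear (cube 1 0 0 0 0 0 1 0)
  have e₇ := key shear 1 1 (cube 0 1 1 0 0 0 1 0)
  have e₈ := key shear 1 1 (cube 1 0 0 1 0 0 0 1)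
  have e₉ := key 1 shear 1 (cube 0 1 0 0 1 0 1 0)
  have e₁₀ := key shear 1 1 (cube 0 1 1 1 1 0 0 0)
  have e₁₁ := key shear 1 1 (cube 1 0 1 1 0 1 0 0)
  norm_num [smulArray_shear_one_one, smulArray_one_shear_one, smulArray_one_one_shear,
    quarticForm_eq, x, cube] at e₁ e₂ e₃ e₄ e₅ e₆ e₇ e₈ e₉ e₁₀ e₁₁
  have h₃ : c 3 = c 0 := by linear_combination 2 * e₂ - e₈
  have h₁ : c 1 = c 0 := by linear_combination e₉ - 2 * e₃ + h₃
  have h₂ : c 2 = c 0 := by linear_combination 2 * e₁ - e₇ + h₁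
  have h₄ : c 4 = -2 * c 0 := by linear_combination e₆ - h₁
  have h₅ : c 5 = -2 * c 0 := by linear_combination e₄ - h₂
  have h₆ : c 6 = -2 * c 0 := by linear_combination e₂ - h₃
  have h₇ : c 7 = -2 * c 0 := by linear_combination e₁ - h₁ - h₂
  have h₈ : c 8 = -2 * c 0 := by linear_combination e₃ - h₁ - h₃
  have h₉ : c 9 = -2 * c 0 := by linear_combination e₅ - h₂ - h₃
  have h₁₀ : c 10 = 4 * c 0 := by linear_combination e₁₁ - h₃ - h₅ - h₆ - h₉
  have h₁₁ : c 11 = 4 * c 0 := by linear_combination e₁₀ - h₁ - h₂ - h₇ - h₈ - h₉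
  funext i
  fin_cases i <;> simp [detCoeff, *, mul_comm]

/-- In degree 4 the space of invariant polynomials has dimension 1: every invariant
homogeneous polynomial of degree 4 is a scalar multiple of Cayley's hyperdeterminant. -/
theorem invariants_degree_four_multiple_of_hyperdeterminant (f : P)
    (hhom : MvPolynomial.IsHomogeneous f 4)
    (hinv : ∀ A B C : Matrix.SpecialLinearGroup (Fin 2) ℂ, act A B C f = f) :
    ∃ lam : ℂ, f = lam • Det := by
  obtain ⟨c, rfl⟩ := exists_eq_quarticForm hhom hinv
  refine ⟨c 0, ?_⟩
  rw [Det_eq_quarticForm, ← quarticForm_smul, ← eq_smul_detCoeff_of_invariant hinv]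
end
end

section
/- For every positive integer e, the power Detᵉ of Cayley's hyperdeterminant is a nonzero invariant polynomial that is homogeneous of degree 4e; consequently the space of invariant homogeneous polynomials of degree d has dimension at least 1 whenever d ≡ 0 (mod 4). -/
open MvPolynomial

noncomputable section

/-!
Cut the array `X` into its two slices `X₀ = (x₀ⱼₖ)` and `X₁ = (x₁ⱼₖ)`. Then `Det` is the
discriminant of the binary quadratic form `q(s, t) = det (s X₀ + t X₁)`. The factors `B` and `C`
act by `Xᵢ ↦ Bᵀ Xᵢ C`, which multiplies `q` by `det B * det C = 1`, and the factor `A` acts by a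
linear substitution of `(s, t)`, which multiplies the discriminant of `q` by `(det A)² = 1`.
-/

namespace Matrix

variable {R : Type*} [CommRing R] {n : Type*} [Fintype n] [DecidableEq n]

def mixedDet (M N : Matrix n n R) : R := det (M + N) - det M - det N

/-- For `n = 2`, the discriminant of the binary quadratic form `det (s • M + t • N)`. -/
def pencilDiscrim (M N : Matrix n n R) : R := discrim (det M) (mixedDet M N) (det N)

theorem mixedDet_mul_mul (U V M N : Matrix n n R) :
    mixedDet (U * M * V) (U * N * V) = det U * det V * mixedDet M N := by
  simp only [mixedDet, ← Matrix.add_mul, ← Matrix.mul_add, det_mul]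
  ring

theorem pencilDiscrim_mul_mul (U V M N : Matrix n n R) :
    pencilDiscrim (U * M * V) (U * N * V) = (det U * det V) ^ 2 * pencilDiscrim M N := by
  simp only [pencilDiscrim, discrim, mixedDet_mul_mul, det_mul]
  ring

section map

variable {S F : Type*} [CommRing S] [FunLike F R S] [RingHomClass F R S] (f : F)

theorem map_det (M : Matrix n n R) : f (det M) = det (M.map f) :=
  RingHom.map_det (f : R →+* S) M

theorem map_mixedDet (M N : Matrix n n R) :
    f (mixedDet M N) = mixedDet (M.map f) (N.map f) := by
  simp only [mixedDet, map_sub, map_det, Matrix.map_add f (map_add f)]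

theorem map_pencilDiscrim (M N : Matrix n n R) :
    f (pencilDiscrim M N) = pencilDiscrim (M.map f) (N.map f) := by
  simp only [pencilDiscrim, discrim, map_sub, map_mul, map_pow, map_ofNat, map_mixedDet,
    map_det]

end map

theorem det_smul_add_smul (s t : R) (M N : Matrix (Fin 2) (Fin 2) R) :
    det (s • M + t • N) = s ^ 2 * det M + s * t * mixedDet M N + t ^ 2 * det N := by
  simp only [mixedDet, det_fin_two, add_apply, smul_apply, smul_eq_mul]
  ring

theorem pencilDiscrim_smul_add_smul (g M N : Matrix (Fin 2) (Fin 2) R) :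
    pencilDiscrim (g 0 0 • M + g 1 0 • N) (g 0 1 • M + g 1 1 • N) =
      det g ^ 2 * pencilDiscrim M N := by
  have hsum : (g 0 0 • M + g 1 0 • N) + (g 0 1 • M + g 1 1 • N) =
      (g 0 0 + g 0 1) • M + (g 1 0 + g 1 1) • N := by
    simp only [add_smul]; abel
  simp only [pencilDiscrim, mixedDet, hsum, det_smul_add_smul, discrim, det_fin_two g]
  ring

end Matrix

namespace MvPolynomial

variable {σ R : Type*} [CommRing R] {n : Type*} [Fintype n] [DecidableEq n]

theorem isHomogeneous_det {M : Matrix n n (MvPolynomial σ R)} {m : ℕ}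
    (hM : ∀ i j, (M i j).IsHomogeneous m) : M.det.IsHomogeneous (Fintype.card n * m) := by
  rw [Matrix.det_apply]
  refine IsHomogeneous.sum _ _ _ fun τ _ => ?_
  have := IsHomogeneous.prod Finset.univ (fun i => M (τ i) i) (fun _ => m) fun i _ => hM _ _
  rw [Finset.sum_const, smul_eq_mul, Finset.card_univ] at this
  rcases Int.units_eq_one_or (Equiv.Perm.sign τ) with h | h <;> simp [h, this, this.neg]

theorem isHomogeneous_mixedDet {M N : Matrix n n (MvPolynomial σ R)} {m : ℕ}
    (hM : ∀ i j, (M i j).IsHomogeneous m) (hN : ∀ i j, (N i j).IsHomogeneous m) :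
    (Matrix.mixedDet M N).IsHomogeneous (Fintype.card n * m) :=
  ((isHomogeneous_det fun i j => (hM i j).add (hN i j)).sub (isHomogeneous_det hM)).sub
    (isHomogeneous_det hN)

theorem isHomogeneous_pencilDiscrim {M N : Matrix n n (MvPolynomial σ R)} {m : ℕ}
    (hM : ∀ i j, (M i j).IsHomogeneous m) (hN : ∀ i j, (N i j).IsHomogeneous m) :
    (Matrix.pencilDiscrim M N).IsHomogeneous (2 * (Fintype.card n * m)) := by
  have hsq := (isHomogeneous_mixedDet hM hN).pow 2
  have hprod := ((isHomogeneous_det hM).mul (isHomogeneous_det hN)).C_mul 4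
  rw [mul_comm] at hsq
  rw [← two_mul] at hprod
  rw [Matrix.pencilDiscrim, discrim, mul_assoc, ← map_ofNat C]
  exact hsq.sub hprod

end MvPolynomial

open Matrix

open scoped MatrixGroups

def slice (i : Fin 2) : Matrix (Fin 2) (Fin 2) P := Matrix.of fun j k => x i j k

theorem Det_eq_pencilDiscrim : Det = pencilDiscrim (slice 0) (slice 1) := by
  simp only [Det, pencilDiscrim, discrim, mixedDet, det_fin_two, slice, Matrix.add_apply, of_apply]
  ring

def toPMatrix (g : SL(2, ℂ)) : Matrix (Fin 2) (Fin 2) P :=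
  SpecialLinearGroup.map (algebraMap ℂ P) g

theorem toPMatrix_apply (g : SL(2, ℂ)) (i j : Fin 2) :
    toPMatrix g i j = algebraMap ℂ P (g i j) :=
  rfl

theorem det_toPMatrix (g : SL(2, ℂ)) : det (toPMatrix g) = 1 :=
  (SpecialLinearGroup.map (algebraMap ℂ P) g).2

theorem act_slice (A B C : SL(2, ℂ)) (i : Fin 2) :
    (slice i).map (act A B C) =
      ∑ i', toPMatrix A i' i • ((toPMatrix B)ᵀ * slice i' * toPMatrix C) := by
  refine Matrix.ext fun j k => ?_
  simp only [act, slice, x, map_apply, of_apply, aeval_X, toPMatrix_apply, algebraMap_eq,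
    Matrix.sum_apply, Matrix.smul_apply, Matrix.mul_apply, transpose_apply, smul_eq_mul,
    Fin.sum_univ_two, C_mul]
  ring

theorem act_Det (A B C : SL(2, ℂ)) : act A B C Det = Det := by
  rw [Det_eq_pencilDiscrim, map_pencilDiscrim, act_slice, act_slice]
  simp only [Fin.sum_univ_two]
  rw [pencilDiscrim_smul_add_smul, pencilDiscrim_mul_mul, det_transpose, det_toPMatrix,
    det_toPMatrix, det_toPMatrix]
  ring

theorem Det_isHomogeneous : Det.IsHomogeneous 4 := by
  have hslice (i : Fin 2) : ∀ j k, (slice i j k).IsHomogeneous 1 :=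
    fun j k => isHomogeneous_X ℂ (i, j, k)
  simpa [Det_eq_pencilDiscrim] using isHomogeneous_pencilDiscrim (hslice 0) (hslice 1)

theorem Det_ne_zero : Det ≠ 0 := by
  let v : Fin 2 × Fin 2 × Fin 2 → ℂ := fun p => if p = (0, 0, 0) ∨ p = (1, 1, 1) then 1 else 0
  have hv : eval v Det = 1 := by simp [v, Det, x]
  intro h
  simp [h] at hv

/-- For every positive integer `e`, `Det ^ e` is a nonzero invariant polynomial,
homogeneous of degree `4 * e`; consequently in every degree `d ≡ 0 (mod 4)` there
exists a nonzero invariant homogeneous polynomial of degree `d`. -/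
theorem hyperdeterminant_powers_invariant :
    (∀ e : ℕ, 0 < e →
      Det ^ e ≠ 0 ∧
      (∀ A B C : Matrix.SpecialLinearGroup (Fin 2) ℂ, act A B C (Det ^ e) = Det ^ e) ∧
      MvPolynomial.IsHomogeneous (Det ^ e) (4 * e)) ∧
    (∀ d : ℕ, d % 4 = 0 →
      ∃ f : P, f ≠ 0 ∧ MvPolynomial.IsHomogeneous f d ∧
        ∀ A B C : Matrix.SpecialLinearGroup (Fin 2) ℂ, act A B C f = f) := by
  have act_Det_pow (e : ℕ) (A B C : SL(2, ℂ)) : act A B C (Det ^ e) = Det ^ e := by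
    rw [map_pow, act_Det]
  refine ⟨fun e _ => ⟨pow_ne_zero e Det_ne_zero, act_Det_pow e, Det_isHomogeneous.pow e⟩,
    fun d hd => ?_⟩
  obtain ⟨e, rfl⟩ := Nat.dvd_of_mod_eq_zero hd
  exact ⟨Det ^ e, pow_ne_zero e Det_ne_zero, Det_isHomogeneous.pow e, act_Det_pow e⟩
end
end
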